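/- For every integer ℓ ≥ 5, β₃(ℓ) ≥ 1 - 1/(2ℓ), while for ℓ = 2, 3, 4, β₃(ℓ) ≤ 1 - 1/(2ℓ). -/

import Mathlib

/-- The digamma function `ψ(x) = Γ'(x)/Γ(x)`. -/
noncomputable def digamma (x : ℝ) : ℝ := deriv Real.Gamma x / Real.Gamma x

/-- `g₂(x) = 3/2 - γ - ψ(x+1) - 2x(ψ(2x) - ψ(x))`. -/
noncomputable def g2 (x : ℝ) : ℝ :=
  3 / 2 - Real.eulerMascheroniConstant - digamma (x + 1)
    - 2 * x * (digamma (2 * x) - digamma x)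

/-- `g₃(x) = 2 - γ - ψ(x+1) + (x/2)(5-3x)ψ(x) - x(1-6x)ψ(2x) - (3x/2)(1+3x)ψ(3x)`. -/
noncomputable def g3 (x : ℝ) : ℝ :=
  2 - Real.eulerMascheroniConstant - digamma (x + 1)
    + x / 2 * (5 - 3 * x) * digamma x
    - x * (1 - 6 * x) * digamma (2 * x)
    - 3 * x / 2 * (1 + 3 * x) * digamma (3 * x)

/-- `β₁(ℓ) = (1/ℓ)(-γ - ψ(1/ℓ))`. -/
noncomputable def beta1 (l : ℝ) : ℝ :=
  1 / l * (-Real.eulerMascheroniConstant - digamma (1 / l))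

/-- `β₂(ℓ) = (1/ℓ)[1 - γ - (1 - 2/ℓ)ψ(1/ℓ) - (2/ℓ)ψ(2/ℓ)]`. -/
noncomputable def beta2 (l : ℝ) : ℝ :=
  1 / l * (1 - Real.eulerMascheroniConstant - (1 - 2 / l) * digamma (1 / l)
    - 2 / l * digamma (2 / l))

/-- `β₃(ℓ) = (1/ℓ)[3/2 - γ - (1 - 3/(2ℓ))(1 - 1/ℓ)ψ(1/ℓ) - (1/ℓ)(1 - 6/ℓ)ψ(2/ℓ)
  - (3/(2ℓ))(1 + 3/ℓ)ψ(3/ℓ)]`. -/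
noncomputable def beta3 (l : ℝ) : ℝ :=
  1 / l * (3 / 2 - Real.eulerMascheroniConstant
    - (1 - 3 / (2 * l)) * (1 - 1 / l) * digamma (1 / l)
    - 1 / l * (1 - 6 / l) * digamma (2 / l)
    - 3 / (2 * l) * (1 + 3 / l) * digamma (3 / l))

/-!
Write `x = 1/ℓ`. Then `β₃(ℓ) - (1 - 1/(2ℓ)) = g₃(x)/ℓ`, and the recurrence `ψ(y + 1) = ψ(y) + 1/y`
turns `g₃` into `g₃(x) = 1/2 - ∑ᵢ wᵢ(x) (ψ(1 + i x) + γ)` (`i = 1, 2, 3`) with polynomial weights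
summing to `1`. As `ψ` is the derivative of the convex function `log ∘ Γ`, it is increasing, so
`ψ(1 + t + n)` lies between `ψ(n + 1) = H_n - γ` and `ψ(n + 2)`; shifting back by `n` squeezes
`ψ(1 + t) + γ` for `0 ≤ t ≤ 1` between two explicit rational expressions.

For `x ≤ 1/7` all weights are nonnegative, and the consequence `ψ(1 + t) + γ ≤ 1/21 + 8t/5` of
the squeeze gives `∑ᵢ wᵢ(x) (ψ(1 + i x) + γ) ≤ 1/21 + (8/5) x (1 + 4x + 3x²) < 1/2`. The cases
`ℓ = 2, …, 6` are decided numerically from the squeeze.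
-/

open Real Set

local notation "γ" => Real.eulerMascheroniConstant

section Digamma

theorem forall_ne_neg_natCast_of_pos {x : ℝ} (hx : 0 < x) : ∀ m : ℕ, x ≠ -m := fun m ↦
  ((neg_nonpos.mpr m.cast_nonneg).trans_lt hx).ne'

theorem digamma_add_one {x : ℝ} (hx : ∀ m : ℕ, x ≠ -m) :
    digamma (x + 1) = digamma x + 1 / x := by
  have hx0 : x ≠ 0 := by simpa using hx 0
  have hshift : HasDerivAt (fun y ↦ Gamma (y + 1)) (Gamma x + x * deriv Gamma x) x := by
    refine HasDerivAt.congr_of_eventuallyEq ?_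
      (eventually_ne_nhds hx0 |>.mono fun y hy ↦ Gamma_add_one hy)
    simpa using (hasDerivAt_id' x).fun_mul (differentiableAt_Gamma hx).hasDerivAt
  rw [digamma, digamma, ← deriv_comp_add_const, hshift.deriv, Gamma_add_one hx0]
  field_simp [Gamma_ne_zero hx]
  ring

theorem digamma_eq_deriv_log_Gamma {x : ℝ} (hx : ∀ m : ℕ, x ≠ -m) :
    digamma x = deriv (log ∘ Gamma) x :=
  (deriv.log (differentiableAt_Gamma hx) (Gamma_ne_zero hx)).symm

theorem digamma_le_digamma {x y : ℝ} (hx : 0 < x) (hxy : x ≤ y) : digamma x ≤ digamma y := by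
  have hy : 0 < y := hx.trans_le hxy
  rw [digamma_eq_deriv_log_Gamma (forall_ne_neg_natCast_of_pos hx),
    digamma_eq_deriv_log_Gamma (forall_ne_neg_natCast_of_pos hy)]
  refine convexOn_log_Gamma.monotoneOn_deriv (fun z hz ↦ ?_) hx hy hxy
  exact (differentiableAt_Gamma (forall_ne_neg_natCast_of_pos hz)).log (Gamma_pos_of_pos hz).ne'

theorem digamma_nat_add_one (n : ℕ) : digamma (n + 1) = -γ + harmonic n := by
  rw [digamma, deriv_Gamma_nat, Gamma_nat_eq_factorial, mul_div_cancel_left₀ _ (by positivity)]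

theorem digamma_add_nat {x : ℝ} (hx : 0 < x) (n : ℕ) :
    digamma (x + n) = digamma x + ∑ j ∈ Finset.range n, 1 / (x + j) := by
  induction n with
  | zero => simp
  | succ n ih =>
    rw [Nat.cast_succ, ← add_assoc, digamma_add_one (forall_ne_neg_natCast_of_pos (by positivity)),
      ih, Finset.sum_range_succ, add_assoc]

end Digamma

section Bounds

open Finset

variable {t : ℝ}

theorem digamma_one_add_mem_Icc (ht0 : 0 ≤ t) (ht1 : t ≤ 1) (n : ℕ) :
    digamma (1 + t) + γ ∈ Icc (harmonic n - ∑ j ∈ range n, 1 / (1 + t + j))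
      (harmonic (n + 1) - ∑ j ∈ range n, 1 / (1 + t + j)) := by
  have hshift := digamma_add_nat (x := 1 + t) (by linarith) n
  have hlo : digamma (n + 1) ≤ digamma (1 + t + n) :=
    digamma_le_digamma (by positivity) (by linarith)
  have hhi : digamma (1 + t + n) ≤ digamma ((n + 1 : ℕ) + 1) :=
    digamma_le_digamma (by positivity) (by push_cast; linarith)
  rw [digamma_nat_add_one] at hlo hhi
  constructor <;> linarith

/-- The tangent-line bound `1/(j+1) - 1/(j+1+t) ≤ t/(j+1)²`, summed over `j < n`. -/
theorem digamma_one_add_add_gamma_le (ht0 : 0 ≤ t) (ht1 : t ≤ 1) (n : ℕ) :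
    digamma (1 + t) + γ ≤ 1 / (n + 1) + t * ∑ j ∈ range n, 1 / ((j : ℝ) + 1) ^ 2 := by
  have hup := (digamma_one_add_mem_Icc ht0 ht1 n).2
  have htangent : ∀ j ∈ range n,
      1 / ((j : ℝ) + 1) - 1 / (1 + t + j) ≤ t * (1 / ((j : ℝ) + 1) ^ 2) := by
    intro j _
    rw [div_sub_div _ _ (by positivity) (by positivity), div_le_iff₀ (by positivity)]
    field_simp
    nlinarith [mul_nonneg ht0 ht0]
  have hsum := sum_le_sum htangent
  rw [sum_sub_distrib, ← mul_sum] at hsum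
  rw [harmonic_succ] at hup
  simp only [harmonic, Rat.cast_add, Rat.cast_sum, Rat.cast_inv, Rat.cast_natCast,
    Nat.cast_succ, one_div] at hup hsum ⊢
  linarith

theorem digamma_one_add_add_gamma_le_linear (ht0 : 0 ≤ t) (ht1 : t ≤ 1) :
    digamma (1 + t) + γ ≤ 1 / 21 + 8 / 5 * t := by
  have hsq : ∑ j ∈ range 20, 1 / ((j : ℝ) + 1) ^ 2 ≤ 8 / 5 := by
    norm_num [sum_range_succ]
  have := digamma_one_add_add_gamma_le ht0 ht1 20
  norm_num at this
  nlinarith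

end Bounds

section G3

theorem beta3_eq_add_g3 {l : ℝ} (hl : 0 < l) : beta3 l = 1 - 1 / (2 * l) + g3 (1 / l) / l := by
  have hshift := digamma_add_one (forall_ne_neg_natCast_of_pos (one_div_pos.mpr hl))
  rw [beta3, g3, hshift, show 2 * (1 / l) = 2 / l by ring, show 3 * (1 / l) = 3 / l by ring]
  field_simp
  ring

theorem g3_eq {x : ℝ} (hx : 0 < x) :
    g3 x = 1 / 2 - ((1 - 3 / 2 * x) * (1 - x) * (digamma (1 + x) + γ)
      + x * (1 - 6 * x) * (digamma (1 + 2 * x) + γ)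
      + 3 / 2 * x * (1 + 3 * x) * (digamma (1 + 3 * x) + γ)) := by
  have h1 := digamma_add_one (forall_ne_neg_natCast_of_pos hx)
  have h2 := digamma_add_one (forall_ne_neg_natCast_of_pos (by positivity : 0 < 2 * x))
  have h3 := digamma_add_one (forall_ne_neg_natCast_of_pos (by positivity : 0 < 3 * x))
  rw [g3, add_comm 1 x, add_comm 1 (2 * x), add_comm 1 (3 * x), h1, h2, h3]
  field_simp
  ring

theorem g3_nonneg {x : ℝ} (hx0 : 0 < x) (hx : x ≤ 1 / 7) : 0 ≤ g3 x := by
  have hA := mul_le_mul_of_nonneg_left (digamma_one_add_add_gamma_le_linear hx0.le (by linarith))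
    (by nlinarith : 0 ≤ (1 - 3 / 2 * x) * (1 - x))
  have hB := mul_le_mul_of_nonneg_left
    (digamma_one_add_add_gamma_le_linear (by positivity : 0 ≤ 2 * x) (by linarith))
    (by nlinarith : 0 ≤ x * (1 - 6 * x))
  have hC := mul_le_mul_of_nonneg_left
    (digamma_one_add_add_gamma_le_linear (by positivity : 0 ≤ 3 * x) (by linarith))
    (by positivity : 0 ≤ 3 / 2 * x * (1 + 3 * x))
  rw [g3_eq hx0]
  nlinarith [mul_pos hx0 hx0, mul_pos (mul_pos hx0 hx0) hx0]

theorem g3_one_fifth_nonneg : 0 ≤ g3 (1 / 5) := by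
  obtain ⟨h1l, h1u⟩ := digamma_one_add_mem_Icc (t := 1 / 5) (by norm_num) (by norm_num) 30
  obtain ⟨h2l, h2u⟩ := digamma_one_add_mem_Icc (t := 2 / 5) (by norm_num) (by norm_num) 30
  obtain ⟨h3l, h3u⟩ := digamma_one_add_mem_Icc (t := 3 / 5) (by norm_num) (by norm_num) 30
  norm_num [harmonic, Finset.sum_range_succ] at h1l h1u h2l h2u h3l h3u
  rw [g3_eq (by norm_num)]
  norm_num
  linarith

theorem g3_one_sixth_nonneg : 0 ≤ g3 (1 / 6) := by
  obtain ⟨h1l, h1u⟩ := digamma_one_add_mem_Icc (t := 1 / 6) (by norm_num) (by norm_num) 12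
  obtain ⟨h2l, h2u⟩ := digamma_one_add_mem_Icc (t := 1 / 3) (by norm_num) (by norm_num) 12
  obtain ⟨h3l, h3u⟩ := digamma_one_add_mem_Icc (t := 1 / 2) (by norm_num) (by norm_num) 12
  norm_num [harmonic, Finset.sum_range_succ] at h1l h1u h2l h2u h3l h3u
  rw [g3_eq (by norm_num)]
  norm_num
  linarith

theorem g3_one_fourth_nonpos : g3 (1 / 4) ≤ 0 := by
  obtain ⟨h1l, h1u⟩ := digamma_one_add_mem_Icc (t := 1 / 4) (by norm_num) (by norm_num) 12
  obtain ⟨h2l, h2u⟩ := digamma_one_add_mem_Icc (t := 1 / 2) (by norm_num) (by norm_num) 12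
  obtain ⟨h3l, h3u⟩ := digamma_one_add_mem_Icc (t := 3 / 4) (by norm_num) (by norm_num) 12
  norm_num [harmonic, Finset.sum_range_succ] at h1l h1u h2l h2u h3l h3u
  rw [g3_eq (by norm_num)]
  norm_num
  linarith

theorem g3_one_third_nonpos : g3 (1 / 3) ≤ 0 := by
  obtain ⟨h1l, h1u⟩ := digamma_one_add_mem_Icc (t := 1 / 3) (by norm_num) (by norm_num) 12
  obtain ⟨h2l, h2u⟩ := digamma_one_add_mem_Icc (t := 2 / 3) (by norm_num) (by norm_num) 12
  obtain ⟨h3l, h3u⟩ := digamma_one_add_mem_Icc (t := 1) (by norm_num) (by norm_num) 12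
  norm_num [harmonic, Finset.sum_range_succ] at h1l h1u h2l h2u h3l h3u
  rw [g3_eq (by norm_num)]
  norm_num
  linarith

theorem g3_one_half_nonpos : g3 (1 / 2) ≤ 0 := by
  obtain ⟨h1l, h1u⟩ := digamma_one_add_mem_Icc (t := 1 / 2) (by norm_num) (by norm_num) 12
  obtain ⟨h2l, h2u⟩ := digamma_one_add_mem_Icc (t := 1) (by norm_num) (by norm_num) 12
  have h3 := digamma_add_one (forall_ne_neg_natCast_of_pos (by norm_num : (0 : ℝ) < 3 / 2))
  norm_num [harmonic, Finset.sum_range_succ] at h1l h1u h2l h2u h3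
  rw [g3_eq (by norm_num)]
  norm_num
  linarith

end G3

theorem one_sub_le_beta3_iff {l : ℝ} (hl : 0 < l) :
    1 - 1 / (2 * l) ≤ beta3 l ↔ 0 ≤ g3 (1 / l) := by
  rw [beta3_eq_add_g3 hl, le_add_iff_nonneg_right, le_div_iff₀ hl, zero_mul]

theorem beta3_le_one_sub_iff {l : ℝ} (hl : 0 < l) :
    beta3 l ≤ 1 - 1 / (2 * l) ↔ g3 (1 / l) ≤ 0 := by
  rw [beta3_eq_add_g3 hl, add_le_iff_nonpos_right, div_le_iff₀ hl, zero_mul]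

theorem g3_inv_natCast_nonneg {ℓ : ℕ} (hℓ : 5 ≤ ℓ) : 0 ≤ g3 (1 / ℓ) := by
  obtain rfl | rfl | h7 : ℓ = 5 ∨ ℓ = 6 ∨ 7 ≤ ℓ := by omega
  · exact_mod_cast g3_one_fifth_nonneg
  · exact_mod_cast g3_one_sixth_nonneg
  · exact g3_nonneg (by positivity) (one_div_le_one_div_of_le (by norm_num) (by exact_mod_cast h7))

theorem beta3_vs_alpha3 :
    (∀ ℓ : ℕ, 5 ≤ ℓ → 1 - 1 / (2 * (ℓ : ℝ)) ≤ beta3 (ℓ : ℝ)) ∧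
    beta3 (2 : ℝ) ≤ 1 - 1 / (2 * (2 : ℝ)) ∧
    beta3 (3 : ℝ) ≤ 1 - 1 / (2 * (3 : ℝ)) ∧
    beta3 (4 : ℝ) ≤ 1 - 1 / (2 * (4 : ℝ)) := by
  refine ⟨fun ℓ hℓ ↦ ?_, ?_, ?_, ?_⟩
  · exact (one_sub_le_beta3_iff (by positivity)).mpr (g3_inv_natCast_nonneg hℓ)
  · exact (beta3_le_one_sub_iff (by norm_num)).mpr g3_one_half_nonpos
  · exact (beta3_le_one_sub_iff (by norm_num)).mpr g3_one_third_nonpos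
  · exact (beta3_le_one_sub_iff (by norm_num)).mpr g3_one_fourth_nonpos
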